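/- arXiv:2210.15780 — 3 statements merged into one kernel-verified Lean document; each statement's English description precedes it below -/
import Mathlib

section
/- Suppose the sequence X : ℤ → ℝ follows the AR(p) recursion after time n with noise sequence ε : ℤ → ℝ, i.e. X_t = Σ_{i=1}^p φ_i X_{t−i} + ε_t for every t > n. Then for every integer h ≥ 1, the h-step prediction error satisfies X_{n+h} − P(h) = Σ_{j=0}^{h−1} a_1(j) · ε_{n+h−j}. -/
/-- If `X : ℤ → ℝ` follows an AR(p) recursion after time `n` with
noise `ε`, i.e. `X t = ∑_{i=1}^p φ_i X (t - i) + ε t` for every `t > n`, then for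
every integer `h ≥ 1` the `h`-step prediction error of the linear predictor `P`
satisfies `X (n + h) - P h = ∑_{j=0}^{h-1} a₁(j) · ε (n + h - j)`. -/
theorem prediction_error_representation
    (p : ℕ) (hp : 1 ≤ p) (φ : Fin p → ℝ)
    (X ε : ℤ → ℝ) (n : ℤ)
    (hAR : ∀ t : ℤ, n < t →
      X t = (∑ i : Fin p, φ i * X (t - ((i : ℕ) + 1 : ℤ))) + ε t)
    (P : ℤ → ℝ)
    (hP0 : ∀ j : ℤ, j ≤ 0 → P j = X (n + j))
    (hPrec : ∀ h : ℤ, 1 ≤ h → P h = ∑ i : Fin p, φ i * P (h - ((i : ℕ) + 1 : ℤ)))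
    (a1 : ℤ → ℝ)
    (ha1_neg : ∀ j : ℤ, j < 0 → a1 j = 0)
    (ha1_zero : a1 0 = 1)
    (ha1_rec : ∀ h : ℤ, 1 ≤ h → a1 h = ∑ i : Fin p, φ i * a1 (h - ((i : ℕ) + 1 : ℤ))) :
    ∀ h : ℕ, 1 ≤ h →
      X (n + h) - P (h : ℤ) = ∑ j ∈ Finset.range h, a1 (j : ℤ) * ε (n + h - j) := by
  have key : ∀ h : ℕ, X (n + h) - P (h : ℤ)
      = ∑ j ∈ Finset.range h, a1 (j : ℤ) * ε (n + h - j) := by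
    intro h
    induction h using Nat.strong_induction_on with
    | _ h IH =>
      rcases Nat.eq_zero_or_pos h with h0 | hpos
      · subst h0
        simp [hP0 0 le_rfl]
      · have h1 : (1:ℤ) ≤ (h:ℤ) := by exact_mod_cast hpos
        have hX := hAR (n + h) (by linarith)
        have hPr := hPrec h h1
        -- the per-coefficient prediction error
        have hDi : ∀ i : Fin p,
            X (n + (h:ℤ) - ((i:ℕ) + 1 : ℤ)) - P ((h:ℤ) - ((i:ℕ) + 1 : ℤ))
              = ∑ k ∈ Finset.range (h-1), a1 ((k:ℤ) - (i:ℕ)) * ε (n + h - 1 - k) := by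
          intro i
          by_cases hcase : h - 1 ≤ (i:ℕ)
          · have hle : (h:ℤ) - ((i:ℕ) + 1) ≤ 0 := by omega
            rw [hP0 _ hle, show (n + (h:ℤ) - ((i:ℕ) + 1 : ℤ))
              = n + ((h:ℤ) - ((i:ℕ) + 1 : ℤ)) from by ring, sub_self]
            symm
            apply Finset.sum_eq_zero
            intro k hk
            have hk' : k < h - 1 := Finset.mem_range.mp hk
            have hneg : (k:ℤ) - (i:ℕ) < 0 := by omega
            rw [ha1_neg _ hneg, zero_mul]
          · -- here i < h - 1
            have hih : (i:ℕ) < h - 1 := by omega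
            set m : ℕ := h - 1 - (i:ℕ) with hm
            have hmlt : m < h := by omega
            have hcast : ((h:ℤ) - ((i:ℕ) + 1 : ℤ)) = (m : ℤ) := by omega
            rw [hcast, show n + (h:ℤ) - ((i:ℕ) + 1 : ℤ) = n + (m:ℤ) from by
              rw [← hcast]; ring]
            rw [IH m hmlt]
            have hsub : Finset.Ico (i:ℕ) (h-1) ⊆ Finset.range (h-1) := by
              intro k hk
              rw [Finset.mem_Ico] at hk
              rw [Finset.mem_range]
              omega
            have hzero : ∀ k ∈ Finset.range (h-1), k ∉ Finset.Ico (i:ℕ) (h-1) →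
                a1 ((k:ℤ) - (i:ℕ)) * ε (n + h - 1 - k) = 0 := by
              intro k hk hk'
              rw [Finset.mem_range] at hk
              rw [Finset.mem_Ico] at hk'
              have hki : k < (i:ℕ) := by omega
              have hneg : (k:ℤ) - (i:ℕ) < 0 := by omega
              rw [ha1_neg _ hneg, zero_mul]
            rw [← Finset.sum_subset hsub hzero, Finset.sum_Ico_eq_sum_range]
            have hlen : h - 1 - (i:ℕ) = m := rfl
            rw [hlen]
            apply Finset.sum_congr rfl
            intro j hj
            congr 1
            · congr 1
              push_cast
              ring
            · congr 1
              have : (m:ℤ) = (h:ℤ) - 1 - (i:ℕ) := by omega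
              push_cast
              omega
        -- main computation
        rw [hX, hPr]
        have hsplit : (∑ i : Fin p, φ i * X (n + (h:ℤ) - ((i:ℕ) + 1 : ℤ))) + ε (n + h)
              - ∑ i : Fin p, φ i * P ((h:ℤ) - ((i:ℕ) + 1 : ℤ))
            = (∑ i : Fin p, φ i *
                (X (n + (h:ℤ) - ((i:ℕ) + 1 : ℤ)) - P ((h:ℤ) - ((i:ℕ) + 1 : ℤ)))) + ε (n + h) := by
          rw [Finset.sum_congr rfl (fun i _ => mul_sub (φ i) _ _), Finset.sum_sub_distrib]
          ring
        rw [hsplit]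
        simp_rw [hDi, Finset.mul_sum]
        rw [Finset.sum_comm]
        have hinner : ∀ k ∈ Finset.range (h-1),
            (∑ i : Fin p, φ i * (a1 ((k:ℤ) - (i:ℕ)) * ε (n + h - 1 - k)))
              = a1 ((k:ℤ) + 1) * ε (n + h - 1 - k) := by
          intro k hk
          rw [ha1_rec ((k:ℤ)+1) (by omega), Finset.sum_mul]
          apply Finset.sum_congr rfl
          intro i _
          rw [show (k:ℤ) + 1 - ((i:ℕ) + 1 : ℤ) = (k:ℤ) - (i:ℕ) from by ring]
          ring
        rw [Finset.sum_congr rfl hinner]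
        rw [show Finset.range h = Finset.range ((h-1)+1) from by congr 1; omega,
          Finset.sum_range_succ']
        simp only [Nat.cast_zero, ha1_zero, one_mul, Nat.cast_add, Nat.cast_one, sub_zero]
        congr 1
        apply Finset.sum_congr rfl
        intro k _
        congr 2
        ring
  intro h _
  exact key h
end

section
/- Let (Ω, ℱ, ℙ) be a probability space and let X_t, ε_t : Ω → ℝ (t ∈ ℤ) be random variables such that, pointwise on Ω, the sequence X follows the AR(p) recursion after time n with noise ε. Fix an integer h ≥ 1 and suppose ε_{n+1}, …, ε_{n+h} are square-integrable, mutually independent, each with mean 0 and variance σ². Then the mean squared h-step prediction error satisfies E[(X_{n+h} − P(h))²] = σ² · Σ_{j=0}^{h−1} a_1(j)², where P(h) is the (pointwise defined) h-step linear predictor. -/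
open MeasureTheory ProbabilityTheory Finset

/-!
The prediction error `e m = X (n + m) - P m` vanishes for `m ≤ 0` and, for `m ≥ 1`, obeys the
AR recursion driven by `ε (n + m)`. Hence it is the convolution of the driving noise with the
impulse response `a₁` of the recursion: `e h = ∑_{j < h} a₁(j) ε (n + h - j)`. This is a weighted
sum of independent centred variables, so its second moment is `∑_{j < h} a₁(j)² σ²`.
-/

section Probability

variable {Ω : Type*} [MeasurableSpace Ω] {μ : Measure Ω} [IsProbabilityMeasure μ]

theorem integral_sq_weighted_sum_of_iIndepFun {ι : Type*} [Fintype ι] {Y : ι → Ω → ℝ}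
    (hY : ∀ i, MemLp (Y i) 2 μ) (hind : iIndepFun Y μ) (hmean : ∀ i, μ[Y i] = 0) (c : ι → ℝ) :
    ∫ ω, (∑ i, c i * Y i ω) ^ 2 ∂μ = ∑ i, c i ^ 2 * variance (Y i) μ := by
  set Z : ι → Ω → ℝ := fun i ω => c i * Y i ω
  have hZ : ∀ i ∈ univ, MemLp (Z i) 2 μ := fun i _ => (hY i).const_mul (c i)
  have hZ_indep : Set.Pairwise ↑(univ : Finset ι) fun i j => Z i ⟂ᵢ[μ] Z j := fun i _ j _ hij =>
    (hind.indepFun hij).comp (measurable_const_mul _) (measurable_const_mul _)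
  have hZ_mean : μ[∑ i, Z i] = 0 := by
    rw [sum_fn, integral_finsetSum _ fun i hi => (hZ i hi).integrable one_le_two]
    simp [Z, integral_const_mul, hmean]
  calc ∫ ω, (∑ i, c i * Y i ω) ^ 2 ∂μ = variance (∑ i, Z i) μ := by
        rw [variance_of_integral_eq_zero (memLp_finsetSum' _ hZ).aemeasurable hZ_mean]
        simp [Z]
    _ = ∑ i, variance (Z i) μ := IndepFun.variance_sum hZ hZ_indep
    _ = ∑ i, c i ^ 2 * variance (Y i) μ := by simp only [Z, variance_const_mul]

end Probability

section LinearRecurrence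

variable {R : Type*} [CommRing R] {p : ℕ} {φ : Fin p → R} {a : ℤ → R}

theorem sum_Ico_mul_shift (ha_neg : ∀ j < 0, a j = 0) (u : ℤ → R) {s : ℤ} (hs : 0 ≤ s) (m : ℤ) :
    ∑ k ∈ Ico 0 (m - s), a k * u (m - s - k) = ∑ k ∈ Ico 0 m, a (k - s) * u (m - k) := by
  have hvanish : ∀ k ∈ Ico 0 m, k ∉ Ico s m → a (k - s) * u (m - k) = 0 := by
    intro k hk hks
    simp only [mem_Ico] at hk hks
    rw [ha_neg _ (by omega), zero_mul]
  rw [← sum_subset (Ico_subset_Ico hs le_rfl) hvanish,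
    show Ico s m = Ico (0 + s) (m - s + s) by rw [zero_add, sub_add_cancel], ← sum_Ico_add']
  refine sum_congr rfl fun k _ => ?_
  rw [add_sub_cancel_right, sub_add_eq_sub_sub, sub_right_comm]

theorem eq_sum_Ico_mul_of_linear_recurrence (ha_neg : ∀ j < 0, a j = 0) (ha_zero : a 0 = 1)
    (ha_rec : ∀ k, 1 ≤ k → a k = ∑ i : Fin p, φ i * a (k - ((i : ℕ) + 1 : ℤ)))
    {e u : ℤ → R} (he_nonpos : ∀ m ≤ 0, e m = 0)
    (he_rec : ∀ m, 1 ≤ m → e m = (∑ i : Fin p, φ i * e (m - ((i : ℕ) + 1 : ℤ))) + u m) (m : ℤ) :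
    e m = ∑ k ∈ Ico 0 m, a k * u (m - k) := by
  have ha_rec_of_nonneg : ∀ k, 0 ≤ k →
      ∑ i : Fin p, φ i * a (k - ((i : ℕ) + 1 : ℤ)) = a k - if k = 0 then 1 else 0 := by
    intro k hk
    rcases hk.eq_or_lt with rfl | hk
    · rw [ha_zero, if_pos rfl, sub_self]
      exact sum_eq_zero fun i _ => by rw [ha_neg _ (by omega), mul_zero]
    · rw [ha_rec k hk, if_neg hk.ne', sub_zero]
  suffices ∀ N : ℕ, ∀ m : ℤ, m ≤ N → e m = ∑ k ∈ Ico 0 m, a k * u (m - k) from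
    this m.toNat m (Int.self_le_toNat m)
  intro N
  induction N with
  | zero =>
    intro m hm
    have hm : m ≤ 0 := by exact_mod_cast hm
    rw [he_nonpos m hm, Ico_eq_empty_of_le hm, sum_empty]
  | succ N ih =>
    intro m hm
    rcases le_or_gt m N with hmN | hmN
    · exact ih m hmN
    have hm1 : 1 ≤ m := by omega
    calc e m = (∑ i : Fin p, φ i * e (m - ((i : ℕ) + 1 : ℤ))) + u m := he_rec m hm1
      _ = (∑ i : Fin p, φ i * ∑ k ∈ Ico 0 m, a (k - ((i : ℕ) + 1 : ℤ)) * u (m - k)) + u m := by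
        congr 1
        refine sum_congr rfl fun i _ => ?_
        rw [ih _ (by omega), sum_Ico_mul_shift ha_neg u (by omega)]
      _ = (∑ k ∈ Ico 0 m, (a k - if k = 0 then 1 else 0) * u (m - k)) + u m := by
        simp_rw [mul_sum, sum_comm (s := univ), ← mul_assoc, ← sum_mul]
        congr 1
        refine sum_congr rfl fun k hk => ?_
        rw [ha_rec_of_nonneg k (mem_Ico.1 hk).1]
      _ = ∑ k ∈ Ico 0 m, a k * u (m - k) := by
        simp [sub_mul, sum_sub_distrib, ite_mul, show (0 : ℤ) < m by omega]

theorem sub_predictor_eq_sum_Ico {X ε P : ℤ → R} {n : ℤ}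
    (hAR : ∀ t, n < t → X t = (∑ i : Fin p, φ i * X (t - ((i : ℕ) + 1 : ℤ))) + ε t)
    (hP0 : ∀ j ≤ 0, P j = X (n + j))
    (hPrec : ∀ h, 1 ≤ h → P h = ∑ i : Fin p, φ i * P (h - ((i : ℕ) + 1 : ℤ)))
    (ha_neg : ∀ j < 0, a j = 0) (ha_zero : a 0 = 1)
    (ha_rec : ∀ k, 1 ≤ k → a k = ∑ i : Fin p, φ i * a (k - ((i : ℕ) + 1 : ℤ))) (m : ℤ) :
    X (n + m) - P m = ∑ k ∈ Ico 0 m, a k * ε (n + (m - k)) := by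
  refine eq_sum_Ico_mul_of_linear_recurrence ha_neg ha_zero ha_rec (e := fun m => X (n + m) - P m)
    (u := fun m => ε (n + m))
    (fun m hm => by rw [hP0 m hm, sub_self]) (fun m hm => ?_) m
  simp only [hAR (n + m) (by omega), hPrec m hm, mul_sub, sum_sub_distrib, add_sub_assoc]
  ring

end LinearRecurrence

theorem sum_Ico_zero_natCast {M : Type*} [AddCommMonoid M] (f : ℤ → M) (m : ℕ) :
    ∑ k ∈ Ico (0 : ℤ) m, f k = ∑ k ∈ range m, f k := by
  simp [Int.Ico_eq_finset_map, sum_map]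

theorem mse_of_h_step_prediction_general
    {Ω : Type*} [MeasurableSpace Ω] (μ : Measure Ω) [IsProbabilityMeasure μ]
    (p : ℕ) (φ : Fin p → ℝ) (σ : ℝ)
    (X ε : ℤ → Ω → ℝ) (n : ℤ)
    (hAR : ∀ ω, ∀ t : ℤ, n < t →
      X t ω = (∑ i : Fin p, φ i * X (t - ((i : ℕ) + 1 : ℤ)) ω) + ε t ω)
    (P : ℤ → Ω → ℝ)
    (hP0 : ∀ ω, ∀ j : ℤ, j ≤ 0 → P j ω = X (n + j) ω)
    (hPrec : ∀ ω, ∀ h : ℤ, 1 ≤ h →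
      P h ω = ∑ i : Fin p, φ i * P (h - ((i : ℕ) + 1 : ℤ)) ω)
    (a1 : ℤ → ℝ)
    (ha1_neg : ∀ j : ℤ, j < 0 → a1 j = 0)
    (ha1_zero : a1 0 = 1)
    (ha1_rec : ∀ h : ℤ, 1 ≤ h → a1 h = ∑ i : Fin p, φ i * a1 (h - ((i : ℕ) + 1 : ℤ)))
    (h : ℕ)
    (hL2 : ∀ t : ℤ, n < t → t ≤ n + h → MemLp (ε t) 2 μ)
    (hind : iIndepFun
      (fun j : Fin h => ε (n + 1 + (j : ℕ))) μ)
    (hmean : ∀ t : ℤ, n < t → t ≤ n + h → ∫ ω, ε t ω ∂μ = 0)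
    (hvar : ∀ t : ℤ, n < t → t ≤ n + h → variance (ε t) μ = σ ^ 2) :
    ∫ ω, (X (n + h) ω - P (h : ℤ) ω) ^ 2 ∂μ
      = σ ^ 2 * ∑ j ∈ Finset.range h, a1 (j : ℤ) ^ 2 := by
  have herr (ω : Ω) : X (n + h) ω - P h ω
      = ∑ j : Fin h, a1 (h - 1 - j : ℕ) * ε (n + 1 + (j : ℕ)) ω := by
    rw [sub_predictor_eq_sum_Ico (hAR ω) (hP0 ω) (hPrec ω) ha1_neg ha1_zero ha1_rec,
      sum_Ico_zero_natCast, ← sum_range_reflect, ← Fin.sum_univ_eq_sum_range]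
    refine sum_congr rfl fun j _ => ?_
    rw [show n + (h - ((h - 1 - j : ℕ) : ℤ)) = n + 1 + (j : ℕ) by omega]
  have hrange (j : Fin h) : n < n + 1 + (j : ℕ) ∧ n + 1 + (j : ℕ) ≤ n + h := by omega
  simp_rw [herr]
  rw [integral_sq_weighted_sum_of_iIndepFun (fun j => hL2 _ (hrange j).1 (hrange j).2) hind
      (fun j => hmean _ (hrange j).1 (hrange j).2)]
  simp_rw [hvar _ (hrange _).1 (hrange _).2]
  rw [← sum_mul, mul_comm, Fin.sum_univ_eq_sum_range (fun j => a1 (h - 1 - j : ℕ) ^ 2),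
    sum_range_reflect (fun j => a1 j ^ 2)]

/-- On a probability space, if the random sequence `X` follows an
AR(p) recursion after time `n` with noise `ε` pointwise, `h ≥ 1`, and
`ε (n+1), …, ε (n+h)` are square-integrable, mutually independent, each with mean `0`
and variance `σ²`, then the mean squared `h`-step prediction error of the pointwise
linear predictor `P` is `E[(X (n+h) - P h)²] = σ² ∑_{j=0}^{h-1} a₁(j)²`. -/
theorem mse_of_h_step_prediction
    {Ω : Type*} [MeasurableSpace Ω] (μ : Measure Ω) [IsProbabilityMeasure μ]
    (p : ℕ) (hp : 1 ≤ p) (φ : Fin p → ℝ) (σ : ℝ) (hσ : 0 < σ)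
    (X ε : ℤ → Ω → ℝ) (n : ℤ)
    (hAR : ∀ ω, ∀ t : ℤ, n < t →
      X t ω = (∑ i : Fin p, φ i * X (t - ((i : ℕ) + 1 : ℤ)) ω) + ε t ω)
    (P : ℤ → Ω → ℝ)
    (hP0 : ∀ ω, ∀ j : ℤ, j ≤ 0 → P j ω = X (n + j) ω)
    (hPrec : ∀ ω, ∀ h : ℤ, 1 ≤ h →
      P h ω = ∑ i : Fin p, φ i * P (h - ((i : ℕ) + 1 : ℤ)) ω)
    (a1 : ℤ → ℝ)
    (ha1_neg : ∀ j : ℤ, j < 0 → a1 j = 0)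
    (ha1_zero : a1 0 = 1)
    (ha1_rec : ∀ h : ℤ, 1 ≤ h → a1 h = ∑ i : Fin p, φ i * a1 (h - ((i : ℕ) + 1 : ℤ)))
    (h : ℕ) (hh : 1 ≤ h)
    (hL2 : ∀ t : ℤ, n < t → t ≤ n + h → MemLp (ε t) 2 μ)
    (hind : iIndepFun
      (fun j : Fin h => ε (n + 1 + (j : ℕ))) μ)
    (hmean : ∀ t : ℤ, n < t → t ≤ n + h → ∫ ω, ε t ω ∂μ = 0)
    (hvar : ∀ t : ℤ, n < t → t ≤ n + h → variance (ε t) μ = σ ^ 2) :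
    ∫ ω, (X (n + h) ω - P (h : ℤ) ω) ^ 2 ∂μ
      = σ ^ 2 * ∑ j ∈ Finset.range h, a1 (j : ℤ) ^ 2 :=
  mse_of_h_step_prediction_general μ p φ σ X ε n hAR P hP0 hPrec a1 ha1_neg ha1_zero ha1_rec h hL2
    hind hmean hvar
end

section
/- Let (Ω, ℱ, ℙ) be a probability space, h ≥ 1 and k ≥ 1 integers, σ > 0, and let Γ be an invertible real p × p matrix and M a real p × p matrix. Let ε_1, …, ε_h be square-integrable random variables, mutually independent, each with mean 0 and variance σ²; let δ, Z : Ω → ℝ^p be random vectors with square-integrable coordinates such that δ and Z are independent of each other and the pair (δ, Z) is independent of (ε_1, …, ε_h), with second-moment matrices E[δδᵀ] = (σ²/k) Γ⁻¹ and E[ZZᵀ] = Γ, and with E[δ_i] = 0 for all i. Then for any reals c_0, …, c_{h−1}, E[(−Σ_{j=0}^{h−1} c_j ε_j + δᵀ M Z)²] = σ² Σ_{j=0}^{h−1} c_j² + (σ²/k) · tr(Mᵀ Γ⁻¹ M Γ). In particular, taking c_j = a_1(j), the variance of the h-step forecast error decomposition equals σ_h² + w_h(k), where σ_h² = σ² Σ_{j=0}^{h−1}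 a_1(j)² and w_h(k) = (σ²/k) tr(Mᵀ Γ⁻¹ M Γ). -/
/-!
Write the error as `-S + T` with `S = ∑ c_j ε_j` and `T = δᵀ M Z`. Since `T` is a function of
`(δ, Z)` and `S` one of `ε`, they are independent, so the cross term `E[S T] = E[S] E[T]` vanishes.
`E[S²]` is the variance of a sum of independent terms, `σ² ∑ c_j²`. Independence of `δ` and `Z`
factors `E[T²] = ∑ M_ij M_i'j' E[δ_i δ_i'] E[Z_j Z_j']`, which is `tr(Mᵀ E[δδᵀ] M E[ZZᵀ])`.
-/

open MeasureTheory ProbabilityTheory Finset Matrix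

theorem trace_transpose_mul_mul_mul {ι R : Type*} [Fintype ι] [CommSemiring R]
    (M A B : Matrix ι ι R) :
    trace (Mᵀ * A * M * B) = ∑ i, ∑ j, ∑ i', ∑ j', M i j * M i' j' * (A i i' * B j' j) := by
  simp only [trace, Matrix.diag, mul_apply, transpose_apply, sum_mul]
  calc _ = ∑ j, ∑ j', ∑ i, ∑ i', M i j * M i' j' * (A i i' * B j' j) :=
        sum_congr rfl fun j _ => sum_congr rfl fun j' _ => by
          rw [sum_comm]; exact sum_congr rfl fun i _ => sum_congr rfl fun i' _ => by ring
    _ = ∑ j, ∑ i, ∑ j', ∑ i', M i j * M i' j' * (A i i' * B j' j) :=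
        sum_congr rfl fun j _ => sum_comm
    _ = ∑ i, ∑ j, ∑ j', ∑ i', M i j * M i' j' * (A i i' * B j' j) := sum_comm
    _ = _ := sum_congr rfl fun i _ => sum_congr rfl fun j _ => sum_comm

section

variable {Ω : Type*} [MeasurableSpace Ω] {μ : Measure Ω}

theorem ProbabilityTheory.IndepFun.memLp_two_mul {X Y : Ω → ℝ} (hXY : IndepFun X Y μ)
    (hX : MemLp X 2 μ) (hY : MemLp Y 2 μ) : MemLp (fun ω => X ω * Y ω) 2 μ := by
  refine (memLp_two_iff_integrable_sq (hX.1.mul hY.1)).2 ?_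
  have hsq : IndepFun (fun ω => X ω ^ 2) (fun ω => Y ω ^ 2) μ :=
    hXY.comp (measurable_id.pow_const 2) (measurable_id.pow_const 2)
  convert hsq.integrable_mul hX.integrable_sq hY.integrable_sq using 2 with ω
  exact mul_pow _ _ _

theorem integral_add_sq_of_indepFun {X Y : Ω → ℝ} (hX : MemLp X 2 μ) (hY : MemLp Y 2 μ)
    (hXY : IndepFun X Y μ) (hX₀ : ∫ ω, X ω ∂μ = 0) :
    ∫ ω, (X ω + Y ω) ^ 2 ∂μ = ∫ ω, X ω ^ 2 ∂μ + ∫ ω, Y ω ^ 2 ∂μ := by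
  have hcross : ∫ ω, X ω * Y ω ∂μ = 0 := by
    rw [hXY.integral_fun_mul_eq_mul_integral hX.1 hY.1, hX₀, zero_mul]
  have hcross_int : Integrable (fun ω => 2 * (X ω * Y ω)) μ :=
    (hX.integrable_mul hY).const_mul 2
  simp_rw [add_sq', mul_assoc]
  rw [integral_add (f := fun ω => X ω ^ 2 + Y ω ^ 2)
      (hX.integrable_sq.add hY.integrable_sq) hcross_int,
    integral_add hX.integrable_sq hY.integrable_sq, integral_const_mul, hcross, mul_zero,
    add_zero]

theorem integral_sq_sum_mul {κ : Type*} [Fintype κ] {U : κ → Ω → ℝ}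
    (hU : ∀ q, MemLp (U q) 2 μ) (c : κ → ℝ) :
    ∫ ω, (∑ q, c q * U q ω) ^ 2 ∂μ = ∑ q, ∑ r, c q * c r * ∫ ω, U q ω * U r ω ∂μ := by
  have hint : ∀ q r, Integrable (fun ω => c q * U q ω * (c r * U r ω)) μ := fun q r => by
    convert ((hU q).integrable_mul (hU r)).const_mul (c q * c r) using 2 with ω
    simp only [Pi.mul_apply]
    ring
  simp_rw [sq, sum_mul_sum]
  rw [integral_finsetSum _ fun q _ => integrable_finsetSum _ fun r _ => hint q r]
  refine sum_congr rfl fun q _ => ?_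
  rw [integral_finsetSum _ fun r _ => hint q r]
  refine sum_congr rfl fun r _ => ?_
  rw [← integral_const_mul]
  simp only [mul_mul_mul_comm]

section WeightedSum

variable {ι : Type*} [Fintype ι] {ε : ι → Ω → ℝ}

theorem integral_sum_mul_eq_zero (hε : ∀ j, Integrable (ε j) μ)
    (hmean : ∀ j, ∫ ω, ε j ω ∂μ = 0) (c : ι → ℝ) :
    ∫ ω, ∑ j, c j * ε j ω ∂μ = 0 := by
  rw [integral_finsetSum _ fun j _ => (hε j).const_mul (c j)]
  simp [integral_const_mul, hmean]

theorem integral_sq_sum_mul_of_pairwise_indepFun [IsProbabilityMeasure μ]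
    (hε : ∀ j, MemLp (ε j) 2 μ) (hind : Pairwise fun i j => IndepFun (ε i) (ε j) μ)
    (hmean : ∀ j, ∫ ω, ε j ω ∂μ = 0) (c : ι → ℝ) :
    ∫ ω, (∑ j, c j * ε j ω) ^ 2 ∂μ = ∑ j, c j ^ 2 * variance (ε j) μ := by
  have hS : ∀ ω, (∑ j, c j • ε j) ω = ∑ j, c j * ε j ω := fun ω => by simp [Finset.sum_apply]
  have hSL2 : MemLp (∑ j, c j • ε j) 2 μ :=
    memLp_finsetSum' _ fun j _ => (hε j).const_smul (c j)
  have hvar : variance (∑ j, c j • ε j) μ = ∑ j, c j ^ 2 * variance (ε j) μ := by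
    rw [IndepFun.variance_sum (fun j _ => (hε j).const_smul (c j)) fun i _ j _ hij =>
      (hind hij).comp (measurable_const_smul (c i)) (measurable_const_smul (c j))]
    simp_rw [variance_smul]
  rw [← hvar, variance_eq_sub hSL2]
  simp only [Pi.pow_apply, hS,
    integral_sum_mul_eq_zero (fun j => (hε j).integrable one_le_two) hmean]
  ring

end WeightedSum

section Bilinear

variable {ι : Type*} {δ Z : Ω → ι → ℝ}

theorem memLp_two_coord_mul_of_indepFun (hδ : ∀ i, MemLp (fun ω => δ ω i) 2 μ)
    (hZ : ∀ j, MemLp (fun ω => Z ω j) 2 μ) (hδZ : IndepFun δ Z μ) (i j : ι) :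
    MemLp (fun ω => δ ω i * Z ω j) 2 μ :=
  (hδZ.comp (measurable_pi_apply i) (measurable_pi_apply j)).memLp_two_mul (hδ i) (hZ j)

variable [Fintype ι]

theorem memLp_two_bilinear_of_indepFun (hδ : ∀ i, MemLp (fun ω => δ ω i) 2 μ)
    (hZ : ∀ j, MemLp (fun ω => Z ω j) 2 μ) (hδZ : IndepFun δ Z μ) (M : Matrix ι ι ℝ) :
    MemLp (fun ω => ∑ i, ∑ j, δ ω i * M i j * Z ω j) 2 μ := by
  refine memLp_finsetSum _ fun i _ => memLp_finsetSum _ fun j _ => ?_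
  convert (memLp_two_coord_mul_of_indepFun hδ hZ hδZ i j).const_mul (M i j) using 2 with ω
  ring

theorem integral_sq_bilinear_of_indepFun (hδ : ∀ i, MemLp (fun ω => δ ω i) 2 μ)
    (hZ : ∀ j, MemLp (fun ω => Z ω j) 2 μ) (hδZ : IndepFun δ Z μ) {A B : Matrix ι ι ℝ}
    (hA : ∀ i i', ∫ ω, δ ω i * δ ω i' ∂μ = A i i')
    (hB : ∀ j j', ∫ ω, Z ω j * Z ω j' ∂μ = B j j') (M : Matrix ι ι ℝ) :
    ∫ ω, (∑ i, ∑ j, δ ω i * M i j * Z ω j) ^ 2 ∂μ = trace (Mᵀ * A * M * B) := by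
  have hmoment : ∀ i j i' j',
      ∫ ω, δ ω i * Z ω j * (δ ω i' * Z ω j') ∂μ = A i i' * B j' j := by
    intro i j i' j'
    have hind : IndepFun (fun ω => δ ω i * δ ω i') (fun ω => Z ω j' * Z ω j) μ :=
      hδZ.comp ((measurable_pi_apply i).mul (measurable_pi_apply i'))
        ((measurable_pi_apply j').mul (measurable_pi_apply j))
    rw [← hA, ← hB, ← hind.integral_fun_mul_eq_mul_integral ((hδ i).1.mul (hδ i').1)
      ((hZ j').1.mul (hZ j).1)]
    congr 1 with ω
    ring
  have hpair : ∀ ω, ∑ i, ∑ j, δ ω i * M i j * Z ω j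
      = ∑ q : ι × ι, M q.1 q.2 * (δ ω q.1 * Z ω q.2) := fun ω => by
    rw [Fintype.sum_prod_type]
    exact sum_congr rfl fun i _ => sum_congr rfl fun j _ => by ring
  simp_rw [hpair]
  rw [integral_sq_sum_mul (U := fun (q : ι × ι) ω => δ ω q.1 * Z ω q.2)
      (fun q => memLp_two_coord_mul_of_indepFun hδ hZ hδZ q.1 q.2) (fun q => M q.1 q.2),
    trace_transpose_mul_mul_mul]
  simp only [Fintype.sum_prod_type, hmoment]

end Bilinear

end

theorem forecast_error_variance_decomposition_general
    {Ω : Type*} [MeasurableSpace Ω] (μ : Measure Ω) [IsProbabilityMeasure μ]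
    (p : ℕ)
    (h k : ℕ) (σ : ℝ)
    (Γ M : Matrix (Fin p) (Fin p) ℝ)
    (ε : Fin h → Ω → ℝ)
    (hεL2 : ∀ j : Fin h, MemLp (ε j) 2 μ)
    (hεind : iIndepFun ε μ)
    (hεmean : ∀ j : Fin h, ∫ ω, ε j ω ∂μ = 0)
    (hεvar : ∀ j : Fin h, variance (ε j) μ = σ ^ 2)
    (δ Z : Ω → Fin p → ℝ)
    (hδL2 : ∀ i : Fin p, MemLp (fun ω => δ ω i) 2 μ)
    (hZL2 : ∀ i : Fin p, MemLp (fun ω => Z ω i) 2 μ)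
    (hδZ : IndepFun δ Z μ)
    (hpair : IndepFun (fun ω => (δ ω, Z ω)) (fun ω (j : Fin h) => ε j ω) μ)
    (hδmom : ∀ i j : Fin p, ∫ ω, δ ω i * δ ω j ∂μ = σ ^ 2 / k * Γ⁻¹ i j)
    (hZmom : ∀ i j : Fin p, ∫ ω, Z ω i * Z ω j ∂μ = Γ i j)
    (a1 : ℤ → ℝ) :
    (∀ c : Fin h → ℝ,
      ∫ ω, (-(∑ j : Fin h, c j * ε j ω)
          + ∑ i : Fin p, ∑ j : Fin p, δ ω i * M i j * Z ω j) ^ 2 ∂μ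
        = σ ^ 2 * (∑ j : Fin h, c j ^ 2)
          + σ ^ 2 / k * Matrix.trace (M.transpose * Γ⁻¹ * M * Γ))
    ∧ (∫ ω, (-(∑ j : Fin h, a1 ((j : ℕ) : ℤ) * ε j ω)
          + ∑ i : Fin p, ∑ j : Fin p, δ ω i * M i j * Z ω j) ^ 2 ∂μ
        = σ ^ 2 * (∑ j ∈ Finset.range h, a1 (j : ℤ) ^ 2)
          + σ ^ 2 / k * Matrix.trace (M.transpose * Γ⁻¹ * M * Γ)) := by
  have hvariance : ∀ c : Fin h → ℝ,
      ∫ ω, (-(∑ j : Fin h, c j * ε j ω)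
          + ∑ i : Fin p, ∑ j : Fin p, δ ω i * M i j * Z ω j) ^ 2 ∂μ
        = σ ^ 2 * (∑ j : Fin h, c j ^ 2)
          + σ ^ 2 / k * Matrix.trace (M.transpose * Γ⁻¹ * M * Γ) := by
    intro c
    have hS : MemLp (fun ω => -∑ j, c j * ε j ω) 2 μ :=
      (memLp_finsetSum _ fun j _ => (hεL2 j).const_mul (c j)).neg
    have hS₀ : ∫ ω, -∑ j, c j * ε j ω ∂μ = 0 := by
      rw [integral_neg, integral_sum_mul_eq_zero (fun j => (hεL2 j).integrable one_le_two) hεmean,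
        neg_zero]
    have hind : IndepFun (fun ω => -∑ j, c j * ε j ω)
        (fun ω => ∑ i, ∑ j, δ ω i * M i j * Z ω j) μ :=
      (hpair.comp (φ := fun v : (Fin p → ℝ) × (Fin p → ℝ) => ∑ i, ∑ j, v.1 i * M i j * v.2 j)
        (ψ := fun v : Fin h → ℝ => -∑ j, c j * v j) (by fun_prop) (by fun_prop)).symm
    rw [integral_add_sq_of_indepFun hS (memLp_two_bilinear_of_indepFun hδL2 hZL2 hδZ M) hind hS₀]
    simp only [neg_sq]
    rw [integral_sq_sum_mul_of_pairwise_indepFun hεL2 (fun i j hij => hεind.indepFun hij) hεmean c,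
      integral_sq_bilinear_of_indepFun hδL2 hZL2 hδZ (A := (σ ^ 2 / k) • Γ⁻¹) hδmom hZmom M]
    simp only [hεvar, ← sum_mul, Matrix.mul_smul, Matrix.smul_mul, trace_smul, smul_eq_mul]
    ring
  refine ⟨hvariance, ?_⟩
  rw [hvariance, Fin.sum_univ_eq_sum_range (fun j => a1 j ^ 2)]

/-- Let `ε₁, …, ε_h` be square-integrable, mutually independent
random variables with mean `0` and variance `σ²`, and let `δ, Z : Ω → ℝ^p` be random
vectors with square-integrable coordinates, independent of each other and (as a pair)
of `(ε₁, …, ε_h)`, with `E[δδᵀ] = (σ²/k) Γ⁻¹`, `E[ZZᵀ] = Γ` and `E[δᵢ] = 0`.  Then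
for any reals `c₀, …, c_{h-1}`,
`E[(-∑_j c_j ε_j + δᵀ M Z)²] = σ² ∑_j c_j² + (σ²/k) tr(Mᵀ Γ⁻¹ M Γ)`;
in particular, taking `c_j = a₁(j)`, the variance of the `h`-step forecast error
decomposition equals `σ_h² + w_h(k)` with `σ_h² = σ² ∑_{j=0}^{h-1} a₁(j)²` and
`w_h(k) = (σ²/k) tr(Mᵀ Γ⁻¹ M Γ)`. -/
theorem forecast_error_variance_decomposition
    {Ω : Type*} [MeasurableSpace Ω] (μ : Measure Ω) [IsProbabilityMeasure μ]
    (p : ℕ) (hp : 1 ≤ p) (φ : Fin p → ℝ)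
    (h k : ℕ) (hh : 1 ≤ h) (hk : 1 ≤ k) (σ : ℝ) (hσ : 0 < σ)
    (Γ M : Matrix (Fin p) (Fin p) ℝ) (hΓ : IsUnit Γ.det)
    (ε : Fin h → Ω → ℝ)
    (hεL2 : ∀ j : Fin h, MemLp (ε j) 2 μ)
    (hεind : iIndepFun ε μ)
    (hεmean : ∀ j : Fin h, ∫ ω, ε j ω ∂μ = 0)
    (hεvar : ∀ j : Fin h, variance (ε j) μ = σ ^ 2)
    (δ Z : Ω → Fin p → ℝ)
    (hδL2 : ∀ i : Fin p, MemLp (fun ω => δ ω i) 2 μ)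
    (hZL2 : ∀ i : Fin p, MemLp (fun ω => Z ω i) 2 μ)
    (hδZ : IndepFun δ Z μ)
    (hpair : IndepFun (fun ω => (δ ω, Z ω)) (fun ω (j : Fin h) => ε j ω) μ)
    (hδmom : ∀ i j : Fin p, ∫ ω, δ ω i * δ ω j ∂μ = σ ^ 2 / k * Γ⁻¹ i j)
    (hZmom : ∀ i j : Fin p, ∫ ω, Z ω i * Z ω j ∂μ = Γ i j)
    (hδmean : ∀ i : Fin p, ∫ ω, δ ω i ∂μ = 0)
    (a1 : ℤ → ℝ)
    (ha1_neg : ∀ j : ℤ, j < 0 → a1 j = 0)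
    (ha1_zero : a1 0 = 1)
    (ha1_rec : ∀ t : ℤ, 1 ≤ t → a1 t = ∑ i : Fin p, φ i * a1 (t - ((i : ℕ) + 1 : ℤ))) :
    (∀ c : Fin h → ℝ,
      ∫ ω, (-(∑ j : Fin h, c j * ε j ω)
          + ∑ i : Fin p, ∑ j : Fin p, δ ω i * M i j * Z ω j) ^ 2 ∂μ
        = σ ^ 2 * (∑ j : Fin h, c j ^ 2)
          + σ ^ 2 / k * Matrix.trace (M.transpose * Γ⁻¹ * M * Γ))
    ∧ (∫ ω, (-(∑ j : Fin h, a1 ((j : ℕ) : ℤ) * ε j ω)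
          + ∑ i : Fin p, ∑ j : Fin p, δ ω i * M i j * Z ω j) ^ 2 ∂μ
        = σ ^ 2 * (∑ j ∈ Finset.range h, a1 (j : ℤ) ^ 2)
          + σ ^ 2 / k * Matrix.trace (M.transpose * Γ⁻¹ * M * Γ)) :=
  forecast_error_variance_decomposition_general μ p h k σ Γ M ε hεL2 hεind hεmean hεvar δ Z hδL2
    hZL2 hδZ hpair hδmom hZmom a1
end
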